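/- For an edge ê = (u,v) of a finite connected weighted undirected graph G and a vertex r with r ≠ u and r ≠ v, the probability that ê belongs to a random spanning tree equals w(ê)·(ℓ_{uu} + ℓ_{vv} - 2ℓ_{uv}), where ℓ_{ij} denotes the (i,j) entry of (L_G^{[r]})^{-1}. -/

import Mathlib

/-!
Setting the weight of `ê = (u, v)` to zero changes `L_G^{[r]}` by the rank-one matrix
`-w(ê) χ χᵀ` with `χ = e_u - e_v`. Since `Z = det L_G^{[r]}` (weighted matrix-tree theorem), the
matrix determinant lemma gives `Z (1 - w(ê) χᵀ (L_G^{[r]})⁻¹ χ)` for the weight of the spanning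
trees avoiding `ê`; the probability of `ê` is `1` minus its ratio to `Z`.

For the matrix-tree theorem, row `i` of `L_G^{[r]}` is the sum over the neighbours `y` of `i` of
`w(i, y) (e_i - e_y)`, with `e_r = 0`. Multilinearity expands the determinant over the parent
maps `f : V ∖ {r} → V` as `∑ f, ∏ w(i, f i) · det (I - P_f)`. If iterating `f` always reaches
`r`, then `I - P_f` is unitriangular for the order by depth, and the edges `{i, f i}` form a
spanning tree; each spanning tree arises from exactly one such `f`. Otherwise the indicator of
the vertices that never reach `r` lies in the kernel of `I - P_f`.
-/

open Finset Classical Polynomial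

noncomputable section

variable {V : Type*} [Fintype V] [DecidableEq V]

/-- Product of the edge weights of a graph (used as the weight of a spanning tree). -/
def tw (w : Sym2 V → ℝ) (H : SimpleGraph V) : ℝ := ∏ e ∈ H.edgeSet.toFinset, w e

/-- The spanning trees of `G`: subgraphs of `G` on all of `V` that are trees. -/
def spanningTrees (G : SimpleGraph V) : Finset (SimpleGraph V) :=
  Finset.univ.filter (fun H => H ≤ G ∧ H.IsTree)

/-- Total weight of all spanning trees (the normalization constant). -/
def Z (G : SimpleGraph V) (w : Sym2 V → ℝ) : ℝ := ∑ H ∈ spanningTrees G, tw w H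

/-- Expectation of `f` over a random spanning tree sampled with probability
proportional to the product of its edge weights. -/
def Ex (G : SimpleGraph V) (w : Sym2 V → ℝ) (f : SimpleGraph V → ℝ) : ℝ :=
  ∑ H ∈ spanningTrees G, (tw w H / Z G w) * f H

/-- Variance of `f` over a random spanning tree. -/
def Var (G : SimpleGraph V) (w : Sym2 V → ℝ) (f : SimpleGraph V → ℝ) : ℝ :=
  Ex G w (fun H => f H ^ 2) - (Ex G w f) ^ 2

/-- ω-weighted degree of `v` in `H` (real degree weights). -/
def degw (ω : Sym2 V → ℝ) (v : V) (H : SimpleGraph V) : ℝ :=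
  ∑ e ∈ H.edgeSet.toFinset.filter (fun e => v ∈ e), ω e

/-- ω-weighted degree of `v` in `H` (natural-number degree weights). -/
def degn (ω : Sym2 V → ℕ) (v : V) (H : SimpleGraph V) : ℕ :=
  ∑ e ∈ H.edgeSet.toFinset.filter (fun e => v ∈ e), ω e

/-- The degree polynomial `P_v(x) = Σ_k (-1)^k w(S_k) x^k`, written as a sum over
spanning trees (grouping the trees by the weighted degree `k` of `v`). -/
def degPoly (G : SimpleGraph V) (w : Sym2 V → ℝ) (ω : Sym2 V → ℕ) (v : V) : Polynomial ℝ :=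
  ∑ H ∈ spanningTrees G,
    Polynomial.C ((-1) ^ (degn ω v H) * tw w H) * Polynomial.X ^ (degn ω v H)

/-- Weighted Laplacian `L = D - A` of a simple graph with edge weights `w`. -/
def lap (G : SimpleGraph V) (w : Sym2 V → ℝ) : Matrix V V ℝ :=
  fun u x => if u = x then ∑ y ∈ Finset.univ.filter (G.Adj u ·), w s(u, y)
    else if G.Adj u x then -w s(u, x) else 0

/-- Delete the row and column indexed by `r`. -/
def del (r : V) (M : Matrix V V ℝ) : Matrix {x : V // x ≠ r} {x : V // x ≠ r} ℝ :=
  M.submatrix Subtype.val Subtype.val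

/-- The subgraph of `G` containing only the edges incident to `v`. -/
def inc (G : SimpleGraph V) (v : V) : SimpleGraph V :=
  SimpleGraph.fromRel (fun a b => G.Adj a b ∧ (a = v ∨ b = v))

end

open Matrix SimpleGraph

section Matrix

variable {n : Type*} [Fintype n] [DecidableEq n]

lemma Matrix.det_add_vecMulVec {A : Matrix n n ℝ} (hA : IsUnit A.det) (x y : n → ℝ) :
    (A + vecMulVec x y).det = A.det * (1 + y ⬝ᵥ A⁻¹ *ᵥ x) := by
  rw [vecMulVec_eq Unit, det_add_replicateCol_mul_replicateRow hA]
  congr 1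
  simp [mul_apply, dotProduct, mulVec, mul_sum, sum_mul, mul_assoc]
  exact sum_comm

lemma Matrix.IsSymm.dotProduct_mulVec_single_sub_single {M : Matrix n n ℝ} (hM : M.IsSymm)
    (i j : n) :
    (Pi.single i 1 - Pi.single j 1) ⬝ᵥ M *ᵥ (Pi.single i 1 - Pi.single j 1) =
      M i i + M j j - 2 * M i j := by
  simp [sub_dotProduct, dotProduct_sub, mulVec_sub, hM.apply i j]
  ring

end Matrix

lemma SimpleGraph.Connected.exists_adj_dist_lt {V : Type*} {G : SimpleGraph V} (hG : G.Connected)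
    {x r : V} (hx : x ≠ r) : ∃ y, G.Adj x y ∧ G.dist y r < G.dist x r := by
  obtain ⟨p, hp⟩ := hG.exists_walk_length_eq_dist x r
  cases p with
  | nil => exact absurd rfl hx
  | cons h q =>
    refine ⟨_, h, ?_⟩
    have := dist_le q
    rw [Walk.length_cons] at hp
    omega

section ParentMap

variable {V : Type*} [DecidableEq V]

def parentMap (r : V) (f : {x // x ≠ r} → V) (x : V) : V :=
  if h : x ≠ r then f ⟨x, h⟩ else r

def ReachesRoot (r : V) (f : {x // x ≠ r} → V) : Prop :=
  ∀ x, ∃ n, (parentMap r f)^[n] x = r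

def depth {r : V} {f : {x // x ≠ r} → V} (hf : ReachesRoot r f) (x : V) : ℕ :=
  Nat.find (hf x)

variable {r : V} {f : {x // x ≠ r} → V}

lemma parentMap_coe (i : {x // x ≠ r}) : parentMap r f i = f i := by
  simp [parentMap, i.2]

lemma reachesRoot_of_lt (φ : V → ℕ) (hφ : ∀ i, φ (f i) < φ i) : ReachesRoot r f := by
  intro x
  induction hn : φ x using Nat.strong_induction_on generalizing x with
  | _ n ih =>
    by_cases hx : x = r
    · exact ⟨0, hx⟩
    · obtain ⟨m, hm⟩ := ih _ (hn ▸ hφ ⟨x, hx⟩) (f ⟨x, hx⟩) rfl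
      exact ⟨m + 1, by simpa [Function.iterate_succ_apply, parentMap, hx] using hm⟩

namespace ReachesRoot

lemma depth_eq_zero_iff (hf : ReachesRoot r f) {x : V} : depth hf x = 0 ↔ x = r := by
  simp [depth]

lemma depth_coe_eq_add_one (hf : ReachesRoot r f) (i : {x // x ≠ r}) :
    depth hf i = depth hf (f i) + 1 := by
  have hsucc (n : ℕ) : (parentMap r f)^[n + 1] i = (parentMap r f)^[n] (f i) := by
    rw [Function.iterate_succ_apply, parentMap_coe]
  simp only [depth, ← hsucc]
  exact Nat.find_comp_succ _ _ i.2

lemma depth_lt (hf : ReachesRoot r f) (i : {x // x ≠ r}) : depth hf (f i) < depth hf i := by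
  rw [hf.depth_coe_eq_add_one i]
  exact Nat.lt_succ_self _

lemma apply_ne_self (hf : ReachesRoot r f) (i : {x // x ≠ r}) : f i ≠ i := fun h => by
  simpa [h] using hf.depth_lt i

end ReachesRoot

noncomputable def parentMatrix (r : V) (f : {x // x ≠ r} → V) :
    Matrix {x // x ≠ r} {x // x ≠ r} ℝ :=
  of fun i j => (if j = i then 1 else 0) - if (j : V) = f i then 1 else 0

variable [Fintype V]

lemma det_parentMatrix_of_reachesRoot (hf : ReachesRoot r f) : (parentMatrix r f).det = 1 := by
  have hparent (i j : {x // x ≠ r}) (hij : depth hf i ≤ depth hf j) : (j : V) ≠ f i := by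
    intro hj
    have := hf.depth_lt i
    rw [← hj] at this
    omega
  let b : {x // x ≠ r} → ℕᵒᵈ := fun i => OrderDual.toDual (depth hf i)
  have hb : (parentMatrix r f).BlockTriangular b := fun i j hij => by
    have hlt : depth hf i < depth hf j := hij
    have hji : j ≠ i := by rintro rfl; exact hlt.false
    simp [parentMatrix, hji, hparent i j hlt.le]
  rw [hb.det]
  refine prod_eq_one fun k _ => ?_
  have : (parentMatrix r f).toSquareBlock b k = 1 := by
    ext ⟨i, hi⟩ ⟨j, hj⟩
    have hij : depth hf i = depth hf j := OrderDual.toDual.injective (hi.trans hj.symm)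
    simp [toSquareBlock_def, parentMatrix, one_apply, hparent i j hij.le, eq_comm]
  rw [this, det_one]

lemma det_parentMatrix_of_not_reachesRoot (hf : ¬ ReachesRoot r f) :
    (parentMatrix r f).det = 0 := by
  let g : V → ℝ := fun x => if ∃ n, (parentMap r f)^[n] x = r then 0 else 1
  have hg_root : g r = 0 := if_pos ⟨0, rfl⟩
  have hg_parent (i : {x // x ≠ r}) : g (f i) = g i := by
    have : (∃ n, (parentMap r f)^[n] (f i) = r) ↔ ∃ n, (parentMap r f)^[n] i = r := by
      constructor
      · rintro ⟨n, hn⟩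
        exact ⟨n + 1, by rwa [Function.iterate_succ_apply, parentMap_coe]⟩
      · rintro ⟨_ | n, hn⟩
        · exact absurd hn i.2
        · exact ⟨n, by rwa [Function.iterate_succ_apply, parentMap_coe] at hn⟩
    simp only [g, this]
  have hg_sum (y : V) : ∑ j : {x // x ≠ r}, (if (j : V) = y then g j else 0) = g y := by
    by_cases hy : y = r
    · subst hy
      rw [hg_root]
      exact sum_eq_zero fun j _ => if_neg j.2
    · rw [Fintype.sum_eq_single ⟨y, hy⟩ fun j hj => if_neg fun h => hj (Subtype.ext h)]
      exact if_pos rfl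
  obtain ⟨x, hx⟩ := not_forall.mp hf
  have hxr : x ≠ r := fun h => hx ⟨0, h⟩
  rw [← exists_mulVec_eq_zero_iff]
  refine ⟨fun j => g j, fun h => ?_, ?_⟩
  · simpa [g, hx] using congrFun h ⟨x, hxr⟩
  · ext i
    simp [mulVec, dotProduct, parentMatrix, sub_mul, sum_sub_distrib, hg_sum, hg_parent]

end ParentMap

section TreeOf

variable {V : Type*}

def treeOf (r : V) (f : {x // x ≠ r} → V) : SimpleGraph V :=
  fromEdgeSet (Set.range fun i : {x // x ≠ r} => s(↑i, f i))

variable {r : V} {f : {x // x ≠ r} → V}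

lemma treeOf_adj {a b : V} :
    (treeOf r f).Adj a b ↔ (∃ i : {x // x ≠ r}, s(↑i, f i) = s(a, b)) ∧ a ≠ b := by
  simp [treeOf]

lemma treeOf_le {G : SimpleGraph V} (hG : ∀ i : {x // x ≠ r}, G.Adj i (f i)) :
    treeOf r f ≤ G := by
  intro a b hab
  obtain ⟨⟨i, hi⟩, -⟩ := treeOf_adj.mp hab
  rw [← G.mem_edgeSet, ← hi]
  exact hG i

variable [DecidableEq V]

namespace ReachesRoot

lemma treeOf_adj_parent (hf : ReachesRoot r f) (i : {x // x ≠ r}) :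
    (treeOf r f).Adj i (f i) :=
  treeOf_adj.mpr ⟨⟨i, rfl⟩, (hf.apply_ne_self i).symm⟩

lemma depth_le_depth_add_one_of_adj (hf : ReachesRoot r f) {a b : V}
    (hab : (treeOf r f).Adj a b) : depth hf a ≤ depth hf b + 1 := by
  obtain ⟨⟨i, hi⟩, -⟩ := treeOf_adj.mp hab
  rcases Sym2.eq_iff.mp hi with ⟨rfl, rfl⟩ | ⟨rfl, rfl⟩
  · exact (hf.depth_coe_eq_add_one i).le
  · exact (hf.depth_lt i).le.trans (Nat.le_succ _)

lemma depth_le_length_add (hf : ReachesRoot r f) {a b : V} (p : (treeOf r f).Walk a b) :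
    depth hf a ≤ p.length + depth hf b := by
  induction p with
  | nil => simp
  | cons h p ih =>
    have := hf.depth_le_depth_add_one_of_adj h
    rw [Walk.length_cons]
    omega

lemma exists_walk_length_eq_depth (hf : ReachesRoot r f) (x : V) :
    ∃ p : (treeOf r f).Walk x r, p.length = depth hf x := by
  induction hn : depth hf x using Nat.strong_induction_on generalizing x with
  | _ n ih =>
    by_cases hx : x = r
    · subst hx
      exact ⟨.nil, by rw [← hn, hf.depth_eq_zero_iff.mpr rfl]; rfl⟩
    · obtain ⟨p, hp⟩ := ih _ (hn ▸ hf.depth_lt ⟨x, hx⟩) (f ⟨x, hx⟩) rfl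
      refine ⟨.cons (hf.treeOf_adj_parent ⟨x, hx⟩) p, ?_⟩
      rw [Walk.length_cons, hp, ← hn, hf.depth_coe_eq_add_one ⟨x, hx⟩]

lemma dist_treeOf (hf : ReachesRoot r f) (x : V) : (treeOf r f).dist x r = depth hf x := by
  obtain ⟨p, hp⟩ := hf.exists_walk_length_eq_depth x
  obtain ⟨q, hq⟩ := p.reachable.exists_walk_length_eq_dist
  have := hf.depth_le_length_add q
  have := dist_le p
  rw [hf.depth_eq_zero_iff.mpr rfl] at *
  omega

lemma injective_edge (hf : ReachesRoot r f) :
    Function.Injective fun i : {x // x ≠ r} => s(↑i, f i) := by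
  intro i j hij
  rcases Sym2.eq_iff.mp hij with ⟨h, -⟩ | ⟨hi, hj⟩
  · exact Subtype.ext h
  · have := hf.depth_lt i
    have := hf.depth_lt j
    rw [hi, ← hj] at *
    omega

lemma edgeSet_treeOf (hf : ReachesRoot r f) :
    (treeOf r f).edgeSet = Set.range fun i : {x // x ≠ r} => s(↑i, f i) := by
  rw [treeOf, edgeSet_fromEdgeSet, sdiff_eq_left, Set.disjoint_left]
  rintro _ ⟨i, rfl⟩
  simpa using (hf.apply_ne_self i).symm

lemma isTree [Fintype V] (hf : ReachesRoot r f) : (treeOf r f).IsTree := by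
  have : Nonempty V := ⟨r⟩
  have hreach (x : V) : (treeOf r f).Reachable x r :=
    (hf.exists_walk_length_eq_depth x).elim fun p _ => p.reachable
  rw [isTree_iff_connected_and_card, hf.edgeSet_treeOf,
    Nat.card_range_of_injective hf.injective_edge]
  refine ⟨⟨fun x y => (hreach x).trans (hreach y).symm⟩, ?_⟩
  have := Fintype.card_pos (α := V)
  simp [Nat.card_eq_fintype_card, Fintype.card_subtype_compl]
  omega

lemma tw_treeOf [Fintype V] (hf : ReachesRoot r f) (w : Sym2 V → ℝ) :
    tw w (treeOf r f) = ∏ i : {x // x ≠ r}, w s(↑i, f i) := by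
  have : (treeOf r f).edgeSet.toFinset = univ.image fun i : {x // x ≠ r} => s(↑i, f i) := by
    ext e
    simp [hf.edgeSet_treeOf]
  rw [tw, this, prod_image fun i _ j _ h => hf.injective_edge h]

/-- The parent of `i` is its neighbour closer to `r`, and distances to `r` are intrinsic to the
tree. -/
lemma treeOf_injective (hf : ReachesRoot r f) {g : {x // x ≠ r} → V} (hg : ReachesRoot r g)
    (h : treeOf r f = treeOf r g) : f = g := by
  funext i
  have hadj : (treeOf r f).Adj i (g i) := h ▸ hg.treeOf_adj_parent i
  have hlt : depth hf (g i) < depth hf i := by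
    rw [← hf.dist_treeOf, ← hf.dist_treeOf, h, hg.dist_treeOf, hg.dist_treeOf]
    exact hg.depth_lt i
  obtain ⟨⟨j, hj⟩, -⟩ := treeOf_adj.mp hadj
  rcases Sym2.eq_iff.mp hj with ⟨hji, hfj⟩ | ⟨hjg, hfj⟩
  · obtain rfl := Subtype.ext hji
    exact hfj
  · have := hf.depth_lt j
    rw [hfj, hjg] at this
    omega

end ReachesRoot

lemma SimpleGraph.IsTree.exists_treeOf_eq [Fintype V] {T : SimpleGraph V} (hT : T.IsTree)
    (r : V) : ∃ f : {x // x ≠ r} → V,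
      (∀ i : {x // x ≠ r}, T.Adj i (f i)) ∧ ReachesRoot r f ∧ treeOf r f = T := by
  choose f hadj hlt using fun i : {x // x ≠ r} => hT.connected.exists_adj_dist_lt i.2
  have hf : ReachesRoot r f := reachesRoot_of_lt (T.dist · r) hlt
  have : Nonempty V := ⟨r⟩
  exact ⟨f, hadj, hf, (maximal_isAcyclic_iff_isTree.mpr hf.isTree).eq_of_le hT.isAcyclic
    (treeOf_le hadj)⟩

end TreeOf

section Laplacian

variable {V : Type*} [Fintype V] [DecidableEq V]

lemma lap_apply_eq_sum (G : SimpleGraph V) (w : Sym2 V → ℝ) (a b : V) :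
    lap G w a b = ∑ y ∈ univ.filter (G.Adj a ·),
      w s(a, y) * ((if b = a then (1 : ℝ) else 0) - if b = y then 1 else 0) := by
  by_cases hab : a = b
  · subst hab
    simp only [lap, if_true]
    refine sum_congr rfl fun y hy => ?_
    simp [(mem_filter.mp hy).2.ne]
  · simp only [lap, if_neg hab, if_neg (Ne.symm hab), zero_sub, mul_neg, sum_neg_distrib,
      mul_ite, mul_one, mul_zero, sum_ite_eq, mem_filter, mem_univ, true_and]
    split_ifs <;> simp

lemma lap_isSymm (G : SimpleGraph V) (w : Sym2 V → ℝ) : (lap G w).IsSymm := by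
  refine IsSymm.ext fun a b => ?_
  by_cases hab : a = b
  · rw [hab]
  · simp [lap, hab, Ne.symm hab, G.adj_comm, Sym2.eq_swap]

lemma det_del_lap_eq_sum (G : SimpleGraph V) (w : Sym2 V → ℝ) (r : V) :
    (del r (lap G w)).det =
      ∑ f ∈ Fintype.piFinset fun i : {x // x ≠ r} => univ.filter (G.Adj i ·),
        (∏ i : {x // x ≠ r}, w s(↑i, f i)) * (parentMatrix r f).det := by
  have hrows : del r (lap G w) = of fun i : {x // x ≠ r} => ∑ y ∈ univ.filter (G.Adj i ·),
      w s(↑i, y) • fun j : {x // x ≠ r} =>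
        (if j = i then (1 : ℝ) else 0) - if (j : V) = y then 1 else 0 := by
    ext i j
    simp [del, lap_apply_eq_sum, Subtype.ext_iff, Finset.sum_apply]
  let D : ({x // x ≠ r} → ℝ) [⋀^{x // x ≠ r}]→ₗ[ℝ] ℝ := detRowAlternating
  rw [hrows]
  exact (D.toMultilinearMap.map_sum_finset _ _).trans
    (sum_congr rfl fun f _ => MultilinearMap.map_smul_univ _ _ _)

theorem det_del_lap (G : SimpleGraph V) (w : Sym2 V → ℝ) (r : V) :
    (del r (lap G w)).det = Z G w := by
  rw [det_del_lap_eq_sum, ← sum_filter_add_sum_filter_not _ (ReachesRoot r),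
    sum_eq_zero (s := filter (¬ ReachesRoot r ·) _) fun f hf => by
      rw [det_parentMatrix_of_not_reachesRoot (mem_filter.mp hf).2, mul_zero], add_zero, Z]
  refine sum_bij (fun f _ => treeOf r f) (fun f hf => ?_) (fun f hf g hg h => ?_)
    (fun T hT => ?_) (fun f hf => ?_)
  · obtain ⟨hadj, hf⟩ := mem_filter.mp hf
    simp only [Fintype.mem_piFinset, mem_filter, mem_univ, true_and] at hadj
    exact mem_filter.mpr ⟨mem_univ _, treeOf_le hadj, hf.isTree⟩
  · exact (mem_filter.mp hf).2.treeOf_injective (mem_filter.mp hg).2 h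
  · obtain ⟨-, hTG, hT⟩ := mem_filter.mp hT
    obtain ⟨f, hadj, hf, rfl⟩ := hT.exists_treeOf_eq r
    refine ⟨f, mem_filter.mpr ⟨?_, hf⟩, rfl⟩
    simpa [Fintype.mem_piFinset] using fun i => hTG (hadj i)
  · have hf := (mem_filter.mp hf).2
    rw [det_parentMatrix_of_reachesRoot hf, mul_one, hf.tw_treeOf]

lemma Z_pos {G : SimpleGraph V} (hG : G.Connected) {w : Sym2 V → ℝ}
    (hw : ∀ e ∈ G.edgeSet, 0 < w e) : 0 < Z G w := by
  obtain ⟨T, hTG, hT⟩ := hG.exists_isTree_le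
  refine sum_pos (fun H hH => prod_pos fun e he => ?_)
    ⟨T, mem_filter.mpr ⟨mem_univ _, hTG, hT⟩⟩
  exact hw e (edgeSet_mono (mem_filter.mp hH).2.1 (Set.mem_toFinset.mp he))

lemma lap_eq_lap_update_add (G : SimpleGraph V) (w : Sym2 V → ℝ) {u v : V} (huv : G.Adj u v) :
    lap G w = lap G (Function.update w s(u, v) 0) +
      w s(u, v) • vecMulVec (Pi.single u 1 - Pi.single v 1) (Pi.single u 1 - Pi.single v 1) := by
  ext a b
  simp only [Matrix.add_apply, Matrix.smul_apply, vecMulVec_apply, lap_apply_eq_sum,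
    Function.update_apply]
  rw [← sub_eq_iff_eq_add', ← sum_sub_distrib]
  simp_rw [← sub_mul]
  have hne := huv.ne
  have hweight (x : V) : (w s(a, x) - if s(a, x) = s(u, v) then 0 else w s(a, x)) =
      if (a = u ∧ x = v) ∨ (a = v ∧ x = u) then w s(u, v) else 0 := by
    simp only [← Sym2.eq_iff]
    split_ifs with h <;> simp [h]
  simp_rw [hweight, ite_mul, zero_mul, sum_filter]
  by_cases hau : a = u
  · subst hau
    rw [Fintype.sum_eq_single v fun x hx => by simp [hx, hne]]
    simp [hne, huv, Pi.single_apply]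
  by_cases hav : a = v
  · subst hav
    rw [Fintype.sum_eq_single u fun x hx => by simp [hx, hau]]
    simp [hne.symm, huv.symm, Pi.single_apply]
  · simp [hau, hav]

lemma del_lap_update_zero (G : SimpleGraph V) (w : Sym2 V → ℝ) {u v r : V} (huv : G.Adj u v)
    (hu : u ≠ r) (hv : v ≠ r) :
    del r (lap G (Function.update w s(u, v) 0)) = del r (lap G w) +
      vecMulVec (-w s(u, v) • (Pi.single ⟨u, hu⟩ 1 - Pi.single ⟨v, hv⟩ 1))
        (Pi.single ⟨u, hu⟩ 1 - Pi.single ⟨v, hv⟩ 1) := by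
  rw [lap_eq_lap_update_add G w huv]
  ext i j
  simp [del, vecMulVec_apply, Pi.single_apply, Subtype.ext_iff]

lemma tw_update_zero (w : Sym2 V → ℝ) (e : Sym2 V) (H : SimpleGraph V) :
    tw (Function.update w e 0) H = if e ∈ H.edgeSet then 0 else tw w H := by
  split_ifs with he
  · exact prod_eq_zero (Set.mem_toFinset.mpr he) (Function.update_self ..)
  · refine prod_congr rfl fun e' he' => Function.update_of_ne ?_ _ _
    rintro rfl
    exact he (Set.mem_toFinset.mp he')

lemma Z_mul_Ex_adj {G : SimpleGraph V} (w : Sym2 V → ℝ) (hZ : Z G w ≠ 0) (u v : V) :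
    Z G w * Ex G w (fun H => if H.Adj u v then 1 else 0) =
      Z G w - Z G (Function.update w s(u, v) 0) := by
  conv_rhs => rw [Z, Z, ← sum_sub_distrib]
  rw [Ex, mul_sum]
  refine sum_congr rfl fun H _ => ?_
  simp only [tw_update_zero, mem_edgeSet]
  split_ifs <;> field_simp <;> ring

end Laplacian

variable {V : Type*} [Fintype V] [DecidableEq V]

/-- for `r ≠ u, v`, the probability that the edge `(u,v)` belongs to a
random spanning tree equals `w(ê)·(ℓ_{uu} + ℓ_{vv} - 2ℓ_{uv})` with `ℓ = (L_G^{[r]})⁻¹`. -/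
theorem stmt10 (G : SimpleGraph V) (hG : G.Connected) (w : Sym2 V → ℝ)
    (hw : ∀ e ∈ G.edgeSet, 0 < w e) (u v r : V) (hadj : G.Adj u v)
    (hu : u ≠ r) (hv : v ≠ r) :
    Ex G w (fun H => if H.Adj u v then 1 else 0) =
      w s(u, v) * ((del r (lap G w))⁻¹ ⟨u, hu⟩ ⟨u, hu⟩
        + (del r (lap G w))⁻¹ ⟨v, hv⟩ ⟨v, hv⟩
        - 2 * (del r (lap G w))⁻¹ ⟨u, hu⟩ ⟨v, hv⟩) := by
  set A := del r (lap G w)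
  set χ : {x // x ≠ r} → ℝ := Pi.single ⟨u, hu⟩ 1 - Pi.single ⟨v, hv⟩ 1
  have hZ : 0 < Z G w := Z_pos hG hw
  have hA : A.det = Z G w := det_del_lap G w r
  have hZ_update :
      Z G (Function.update w s(u, v) 0) = Z G w * (1 - w s(u, v) * (χ ⬝ᵥ A⁻¹ *ᵥ χ)) := by
    rw [← det_del_lap, del_lap_update_zero G w hadj hu hv,
      det_add_vecMulVec (hA ▸ hZ.ne'.isUnit), hA, mulVec_smul, dotProduct_smul, smul_eq_mul]
    ring
  have hχ : χ ⬝ᵥ A⁻¹ *ᵥ χ =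
      A⁻¹ ⟨u, hu⟩ ⟨u, hu⟩ + A⁻¹ ⟨v, hv⟩ ⟨v, hv⟩ - 2 * A⁻¹ ⟨u, hu⟩ ⟨v, hv⟩ :=
    ((lap_isSymm G w).submatrix _).inv.dotProduct_mulVec_single_sub_single _ _
  rw [← mul_right_inj' hZ.ne', Z_mul_Ex_adj w hZ.ne', hZ_update, hχ]
  ring
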